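/- arXiv:2008.06934 — 3 statements merged into one kernel-verified Lean document; each statement's English description precedes it below -/
import Mathlib

section
/- In the polynomial ring ℚ[X, Y], a polynomial p satisfies p(−X, Y) = p(X, Y), p(X, −Y) = p(X, Y) and p(Y, X) = p(X, Y) if and only if p belongs to the ℚ-subalgebra generated by X² + Y² and X²Y². Equivalently, the ring of invariants of ℚ[X, Y] under the order-8 group of ℚ-algebra automorphisms generated by X ↦ −X, by Y ↦ −Y, and by the swap X ↔ Y equals ℚ[X² + Y², X²Y²]. -/
/-! Invariance under `X ↦ -X` and `Y ↦ -Y` forces every monomial of `p` to have even exponents,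
so `p = q(X², Y²)`. The swap then makes `q` symmetric, so by the fundamental theorem of symmetric
polynomials `q` is a polynomial in `X + Y` and `XY`, i.e. `p` is one in `X² + Y²` and `X²Y²`.
Conversely, all three automorphisms fix these two generators. -/

open MvPolynomial

namespace MvPolynomial

variable {σ R : Type*}

section Scaling

variable [CommSemiring R] (c : σ → R)

theorem aeval_C_mul_X_monomial (d : σ →₀ ℕ) (r : R) :
    aeval (fun j => C (c j) * X j) (monomial d r) =
      monomial d ((d.prod fun j k => c j ^ k) * r) := by
  rw [aeval_monomial, monomial_eq, algebraMap_eq, C_mul]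
  simp only [mul_pow, Finsupp.prod_mul, ← map_pow, ← map_finsuppProd]
  ring

theorem coeff_aeval_C_mul_X (p : MvPolynomial σ R) (d : σ →₀ ℕ) :
    coeff d (aeval (fun j => C (c j) * X j) p) = (d.prod fun j k => c j ^ k) * coeff d p := by
  classical
  induction p using induction_on' with
  | monomial u r =>
    rw [aeval_C_mul_X_monomial, coeff_monomial, coeff_monomial]
    split_ifs with h
    · rw [h]
    · rw [mul_zero]
  | add f g hf hg => rw [map_add, coeff_add, coeff_add, hf, hg, mul_add]

end Scaling

theorem even_of_mem_support_of_aeval_update_neg_X [CommRing R] [IsDomain R] [DecidableEq σ]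
    (hR : ringChar R ≠ 2) {p : MvPolynomial σ R} {i : σ}
    (h : aeval (Function.update X i (-X i)) p = p) {d : σ →₀ ℕ} (hd : d ∈ p.support) :
    Even (d i) := by
  set ε : σ → R := Function.update 1 i (-1)
  have hsign : Function.update X i (-X i) = fun j => C (ε j) * X j := by
    funext j
    rcases eq_or_ne j i with rfl | hj
    · simp [ε]
    · simp [ε, hj]
  have hprod : (d.prod fun j k => ε j ^ k) = (-1) ^ d i := by
    rw [Finsupp.prod_eq_single i (fun j _ hj => by simp [ε, hj]) fun _ => by simp]
    simp [ε]
  have hcoeff := coeff_aeval_C_mul_X ε p d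
  rw [← hsign, h, hprod, eq_comm, mul_eq_right₀ (mem_support_iff.mp hd)] at hcoeff
  exact (neg_one_pow_eq_one_iff_even (Ring.neg_one_ne_one_of_char_ne_two hR)).mp hcoeff

theorem exists_expand_eq_of_dvd [CommSemiring R] {n : ℕ} {p : MvPolynomial σ R}
    (h : ∀ d ∈ p.support, ∀ i, n ∣ d i) : ∃ q, expand n q = p := by
  refine ⟨∑ d ∈ p.support, monomial (d ⌊/⌋ n) (coeff d p), ?_⟩
  conv_rhs => rw [p.as_sum]
  rw [map_sum]
  refine Finset.sum_congr rfl fun d hd => ?_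
  rw [expand_monomial]
  congr
  ext i
  simp [Nat.mul_div_cancel' (h d hd i)]

theorem isSymmetric_expand_iff [CommSemiring R] {n : ℕ} (hn : 0 < n) {q : MvPolynomial σ R} :
    (expand n q).IsSymmetric ↔ q.IsSymmetric :=
  forall_congr' fun e => by rw [rename_expand, expand_inj hn]

theorem IsSymmetric.mem_adjoin_range_esymm [CommRing R] [Fintype σ] {n : ℕ}
    (hn : Fintype.card σ ≤ n) {p : MvPolynomial σ R} (hp : p.IsSymmetric) :
    p ∈ Algebra.adjoin R (Set.range fun i : Fin n => esymm σ R (i + 1)) := by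
  obtain ⟨r, hr⟩ := esymmAlgHom_surjective R hn ⟨p, hp⟩
  rw [← aeval_range]
  exact ⟨r, (esymmAlgHom_apply r).symm.trans (congrArg Subtype.val hr)⟩

theorem isSymmetric_of_rename_swap [CommSemiring R] {p : MvPolynomial (Fin 2) R}
    (h : rename (Equiv.swap 0 1) p = p) : p.IsSymmetric := by
  intro e
  rcases (by decide : ∀ e : Equiv.Perm (Fin 2), e = 1 ∨ e = Equiv.swap 0 1) e with rfl | rfl
  · simp
  · exact h

theorem expand_two_esymm_fin_two [CommSemiring R] :
    (fun i : Fin 2 => expand 2 (esymm (Fin 2) R (i + 1))) =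
      ![X 0 ^ 2 + X 1 ^ 2, X 0 ^ 2 * X 1 ^ 2] := by
  funext i
  fin_cases i
  · simp [esymm_one, expand_X]
  · have : Finset.powersetCard 2 (Finset.univ : Finset (Fin 2)) = {Finset.univ} := by
      simpa using Finset.powersetCard_self (Finset.univ : Finset (Fin 2))
    simp [esymm, expand_X, this]

theorem IsSymmetric.expand_two_mem_adjoin [CommRing R] {q : MvPolynomial (Fin 2) R}
    (hq : q.IsSymmetric) :
    expand 2 q ∈
      Algebra.adjoin R ({X 0 ^ 2 + X 1 ^ 2, X 0 ^ 2 * X 1 ^ 2} : Set (MvPolynomial (Fin 2) R)) := by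
  rw [← Matrix.range_cons_cons_empty _ _ ![], ← expand_two_esymm_fin_two, Set.range_comp',
    ← AlgHom.map_adjoin]
  exact Subalgebra.mem_map.mpr ⟨q, hq.mem_adjoin_range_esymm (by simp), rfl⟩

end MvPolynomial

/-- The ring of invariants of `ℚ[X, Y]` under the order-8 group of `ℚ`-algebra automorphisms
generated by `X ↦ −X`, by `Y ↦ −Y`, and by the swap `X ↔ Y` equals `ℚ[X² + Y², X²Y²]`:
a polynomial `p` satisfies `p(−X, Y) = p`, `p(X, −Y) = p` and `p(Y, X) = p` if and only if
it belongs to the `ℚ`-subalgebra generated by `X² + Y²` and `X²Y²`. -/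
theorem invariants_dihedral_eight (p : MvPolynomial (Fin 2) ℚ) :
    (aeval ![-X 0, X 1] p = p ∧ aeval ![X 0, -X 1] p = p ∧ aeval ![X 1, X 0] p = p) ↔
      p ∈ Algebra.adjoin ℚ
        ({X 0 ^ 2 + X 1 ^ 2, X 0 ^ 2 * X 1 ^ 2} : Set (MvPolynomial (Fin 2) ℚ)) := by
  constructor
  · rintro ⟨hX, hY, hswap⟩
    have heven : ∀ d ∈ p.support, ∀ i, 2 ∣ d i := by
      intro d hd i
      refine (even_of_mem_support_of_aeval_update_neg_X (by simp) ?_ hd).two_dvd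
      fin_cases i
      · rwa [show ![-X 0, X 1] = Function.update X 0 (-X 0) by
          funext j; fin_cases j <;> simp] at hX
      · rwa [show ![X 0, -X 1] = Function.update X 1 (-X 1) by
          funext j; fin_cases j <;> simp] at hY
    obtain ⟨q, rfl⟩ := exists_expand_eq_of_dvd heven
    refine ((isSymmetric_expand_iff two_pos).mp
      (isSymmetric_of_rename_swap ?_)).expand_two_mem_adjoin
    rwa [show rename (Equiv.swap (0 : Fin 2) 1) = aeval ![X 1, X 0] from
      algHom_ext fun j => by fin_cases j <;> simp]
  · intro hp
    refine ⟨?_, ?_, ?_⟩ <;>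
      refine (AlgHom.eqOn_adjoin_iff (ψ := AlgHom.id ℚ _)).mpr ?_ hp <;>
      rintro _ (rfl | rfl) <;> simp <;> ring
end

section
/- Let ρ be the ℚ-algebra automorphism of ℚ[X, Y] determined by X ↦ −Y, Y ↦ −X (an involution). A polynomial p ∈ ℚ[X, Y] satisfies ρ(p) = p if and only if p belongs to the ℚ-subalgebra generated by X − Y and XY. -/
open MvPolynomial

/-!
Conjugating by the substitution `X ↦ -X` turns `X ↦ -Y, Y ↦ -X` into the swap `X ↔ Y`, so the
fixed polynomials are the images of the symmetric ones. By the fundamental theorem of symmetric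
polynomials these are generated by `X + Y` and `XY`, whose images are `-(X - Y)` and `-XY`.
-/

theorem Algebra.adjoin_neg {R A : Type*} [CommRing R] [Ring A] [Algebra R A] (s : Set A) :
    Algebra.adjoin R (-s) = Algebra.adjoin R s := by
  refine le_antisymm (Algebra.adjoin_le fun x hx => ?_) (Algebra.adjoin_le fun x hx => ?_)
  · simpa using neg_mem (Algebra.subset_adjoin (R := R) (Set.mem_neg.1 hx))
  · simpa using neg_mem (Algebra.subset_adjoin (R := R) (Set.neg_mem_neg.2 hx))

theorem Algebra.apply_mem_adjoin_iff_of_involutive {R A : Type*} [CommSemiring R] [Semiring A]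
    [Algebra R A] {f : A →ₐ[R] A} (hf : Function.Involutive f) {s : Set A} {x : A} :
    f x ∈ Algebra.adjoin R s ↔ x ∈ Algebra.adjoin R (f '' s) := by
  rw [Algebra.adjoin_image, Subalgebra.mem_map]
  exact ⟨fun h => ⟨f x, h, hf x⟩, by rintro ⟨y, hy, rfl⟩; rwa [hf y]⟩

namespace MvPolynomial

variable {R : Type*} [CommRing R]

theorem symmetricSubalgebra_eq_adjoin_esymm (σ : Type*) [Fintype σ] :
    symmetricSubalgebra σ R =
      Algebra.adjoin R (Set.range fun i : Fin (Fintype.card σ) => esymm σ R (i + 1)) := by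
  have h : (symmetricSubalgebra σ R).val.comp (esymmAlgHom σ R _) =
      aeval fun i : Fin (Fintype.card σ) => esymm σ R (i + 1) := by
    ext i
    simp [esymmAlgHom]
  rw [Algebra.adjoin_range_eq_range_aeval, ← h, AlgHom.range_comp,
    (AlgHom.range_eq_top _).2 (esymmAlgHom_surjective R le_rfl), Algebra.map_top,
    Subalgebra.range_val]

theorem esymm_fin_two_two : esymm (Fin 2) R 2 = X 0 * X 1 := by
  rw [esymm, show Finset.powersetCard 2 (Finset.univ : Finset (Fin 2)) = {Finset.univ} by decide]
  simp [Fin.prod_univ_two]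

theorem symmetricSubalgebra_fin_two :
    symmetricSubalgebra (Fin 2) R = Algebra.adjoin R {X 0 + X 1, X 0 * X 1} := by
  rw [symmetricSubalgebra_eq_adjoin_esymm, Fintype.card_fin]
  congr
  ext
  simp [Fin.exists_fin_two, eq_comm, esymm_one, Fin.sum_univ_two, esymm_fin_two_two]

theorem isSymmetric_fin_two_iff {p : MvPolynomial (Fin 2) R} :
    p.IsSymmetric ↔ rename (Equiv.swap 0 1) p = p := by
  refine ⟨fun h => h _, fun h e => ?_⟩
  obtain rfl | rfl : e = 1 ∨ e = Equiv.swap 0 1 := by revert e; decide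
  · simp
  · exact h

noncomputable def negFst : MvPolynomial (Fin 2) R →ₐ[R] MvPolynomial (Fin 2) R :=
  aeval ![-X 0, X 1]

theorem negFst_involutive : Function.Involutive (negFst (R := R)) := by
  suffices h : (negFst (R := R)).comp negFst = AlgHom.id R _ from fun p => congr($h p)
  ext i : 1
  fin_cases i <;> simp [negFst]

theorem aeval_neg_swap_eq_negFst_conj :
    aeval ![-X 1, -X 0] = (negFst (R := R)).comp ((rename (Equiv.swap 0 1)).comp negFst) := by
  ext i : 1
  fin_cases i <;> simp [negFst]

theorem negFst_image_symmetric_generators :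
    negFst '' {X 0 + X 1, X 0 * X 1} =
      -({X 0 - X 1, X 0 * X 1} : Set (MvPolynomial (Fin 2) R)) := by
  simp [negFst, Set.image_insert_eq, neg_add_eq_sub]

theorem aeval_neg_swap_eq_self_iff (p : MvPolynomial (Fin 2) R) :
    aeval ![-X 1, -X 0] p = p ↔ p ∈ Algebra.adjoin R {X 0 - X 1, X 0 * X 1} :=
  calc aeval ![-X 1, -X 0] p = p
      ↔ negFst (rename (Equiv.swap 0 1) (negFst p)) = p := by
        rw [aeval_neg_swap_eq_negFst_conj]; rfl
    _ ↔ rename (Equiv.swap 0 1) (negFst p) = negFst p := negFst_involutive.eq_iff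
    _ ↔ negFst p ∈ symmetricSubalgebra (Fin 2) R := by
        rw [mem_symmetricSubalgebra, isSymmetric_fin_two_iff]
    _ ↔ p ∈ Algebra.adjoin R (negFst '' {X 0 + X 1, X 0 * X 1}) := by
        rw [symmetricSubalgebra_fin_two,
          Algebra.apply_mem_adjoin_iff_of_involutive negFst_involutive]
    _ ↔ p ∈ Algebra.adjoin R {X 0 - X 1, X 0 * X 1} := by
        rw [negFst_image_symmetric_generators, Algebra.adjoin_neg]

end MvPolynomial

/-- A polynomial `p ∈ ℚ[X, Y]` is fixed by the involutive `ℚ`-algebra automorphism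
`ρ : X ↦ −Y, Y ↦ −X` if and only if it belongs to the `ℚ`-subalgebra generated by
`X − Y` and `XY`. -/
theorem invariants_antidiagonal_involution (p : MvPolynomial (Fin 2) ℚ) :
    aeval ![-X 1, -X 0] p = p ↔
      p ∈ Algebra.adjoin ℚ ({X 0 - X 1, X 0 * X 1} : Set (MvPolynomial (Fin 2) ℚ)) :=
  aeval_neg_swap_eq_self_iff p
end

section
/- Let s and r be the ℚ-algebra automorphisms of ℚ[X, Y] determined by s: X ↦ Y, Y ↦ X and r: X ↦ −Y, Y ↦ −X. A polynomial p ∈ ℚ[X, Y] satisfies s(p) = p and r(p) = p if and only if p belongs to the ℚ-subalgebra generated by (X + Y)² and XY. -/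
/-!
In the coordinates `u = X + Y`, `v = X - Y` the swap `s` becomes `v ↦ -v` and `r` becomes
`u ↦ -u`. A polynomial fixed by both sign changes has only monomials with even exponents, so the
invariants are exactly `ℚ[u², v²]`, and `ℚ[u², v²] = ℚ[(X + Y)², XY]` because
`v² = u² - 4XY`.
-/

open MvPolynomial Set

namespace MvPolynomial

variable {σ R : Type*} [CommRing R]

theorem monomial_mem_adjoin_sq {m : σ →₀ ℕ} (hm : ∀ i, Even (m i)) (c : R) :
    monomial m c ∈ Algebra.adjoin R (range fun i => (X i ^ 2 : MvPolynomial σ R)) := by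
  rw [monomial_eq, Finsupp.prod]
  refine mul_mem (Subalgebra.algebraMap_mem _ c) (prod_mem fun i _ => ?_)
  rw [← Nat.two_mul_div_two_of_even (hm i), pow_mul]
  exact pow_mem (Algebra.subset_adjoin (mem_range_self i)) _

variable [DecidableEq σ]

noncomputable def negVar (i : σ) : MvPolynomial σ R →ₐ[R] MvPolynomial σ R :=
  aeval (Function.update X i (-X i))

theorem negVar_monomial (i : σ) (m : σ →₀ ℕ) (c : R) :
    negVar i (monomial m c) = (-1 : R) ^ m i • monomial m c := by
  have hX : ∀ j k, Function.update X i (-X i) j ^ k =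
      (if j = i then (-1 : MvPolynomial σ R) ^ k else 1) * X j ^ k := by
    intro j k
    rw [Function.update_apply]
    split_ifs with h
    · rw [h, neg_pow]
    · rw [one_mul]
  rw [negVar, aeval_monomial, Finsupp.prod, Finset.prod_congr rfl fun j _ => hX j (m j),
    Finset.prod_mul_distrib, Finset.prod_ite_eq', monomial_eq, Finsupp.prod, smul_eq_C_mul]
  have hsign : (if i ∈ m.support then (-1 : MvPolynomial σ R) ^ m i else 1) = C ((-1) ^ m i) := by
    split_ifs with h
    · simp
    · simp [Finsupp.notMem_support_iff.mp h]
  rw [hsign, algebraMap_eq]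
  ring

theorem coeff_negVar (i : σ) (m : σ →₀ ℕ) (f : MvPolynomial σ R) :
    coeff m (negVar i f) = (-1) ^ m i * coeff m f := by
  induction f using MvPolynomial.induction_on' with
  | monomial n c =>
    rw [negVar_monomial, coeff_smul, coeff_monomial, smul_eq_mul]
    split_ifs with h <;> simp [h]
  | add f g hf hg => rw [map_add, coeff_add, coeff_add, hf, hg, mul_add]

theorem mem_adjoin_sq_iff [IsAddTorsionFree R] {f : MvPolynomial σ R} :
    f ∈ Algebra.adjoin R (range fun i => (X i ^ 2 : MvPolynomial σ R)) ↔
      ∀ i, negVar i f = f := by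
  constructor
  · intro hf i
    suffices Algebra.adjoin R _ ≤ AlgHom.equalizer (negVar i) (AlgHom.id R _) from this hf
    rw [Algebra.adjoin_le_iff]
    rintro _ ⟨j, rfl⟩
    by_cases h : j = i
    · subst h; simp [negVar]
    · simp [negVar, Function.update_of_ne h]
  · intro hf
    rw [f.as_sum]
    refine sum_mem fun m hm => monomial_mem_adjoin_sq (fun i => ?_) _
    by_contra hodd
    have h := coeff_negVar i m f
    rw [hf i, (Nat.not_even_iff_odd.mp hodd).neg_one_pow, neg_one_mul, self_eq_neg] at h
    exact mem_support_iff.mp hm h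

end MvPolynomial

noncomputable def sumDiffEquiv : MvPolynomial (Fin 2) ℚ ≃ₐ[ℚ] MvPolynomial (Fin 2) ℚ :=
  AlgEquiv.ofAlgHom (aeval ![X 0 + X 1, X 0 - X 1])
    (aeval ![(2⁻¹ : ℚ) • (X 0 + X 1), (2⁻¹ : ℚ) • (X 0 - X 1)])
    (by ext i : 1; fin_cases i <;> simp <;> module)
    (by ext i : 1; fin_cases i <;> simp <;> module)

theorem aeval_swap_sumDiffEquiv (f : MvPolynomial (Fin 2) ℚ) :
    aeval ![X 1, X 0] (sumDiffEquiv f) = sumDiffEquiv (negVar 1 f) := by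
  suffices (aeval ![X 1, X 0]).comp sumDiffEquiv.toAlgHom =
      sumDiffEquiv.toAlgHom.comp (negVar 1) from AlgHom.congr_fun this f
  ext i : 1
  fin_cases i <;> simp [sumDiffEquiv, negVar, add_comm]

theorem aeval_negSwap_sumDiffEquiv (f : MvPolynomial (Fin 2) ℚ) :
    aeval ![-X 1, -X 0] (sumDiffEquiv f) = sumDiffEquiv (negVar 0 f) := by
  suffices (aeval ![-X 1, -X 0]).comp sumDiffEquiv.toAlgHom =
      sumDiffEquiv.toAlgHom.comp (negVar 0) from AlgHom.congr_fun this f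
  ext i : 1
  fin_cases i <;> simp [sumDiffEquiv, negVar, add_comm, ← sub_eq_add_neg]

theorem adjoin_sumDiff_sq :
    Algebra.adjoin ℚ {(X 0 + X 1) ^ 2, (X 0 - X 1) ^ 2} =
      Algebra.adjoin ℚ ({(X 0 + X 1) ^ 2, X 0 * X 1} : Set (MvPolynomial (Fin 2) ℚ)) := by
  have hdiff : ((X 0 + X 1) ^ 2 - (X 0 - X 1) ^ 2 : MvPolynomial (Fin 2) ℚ) =
      (4 : ℚ) • (X 0 * X 1) := by
    rw [ofNat_smul_eq_nsmul]; ring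
  apply le_antisymm <;> rw [Algebra.adjoin_le_iff, insert_subset_iff, singleton_subset_iff] <;>
    refine ⟨Algebra.subset_adjoin (by simp), ?_⟩
  · rw [← sub_sub_cancel ((X 0 + X 1) ^ 2) ((X 0 - X 1) ^ 2), hdiff]
    exact sub_mem (Algebra.subset_adjoin (by simp))
      (Subalgebra.smul_mem _ (Algebra.subset_adjoin (by simp)) _)
  · rw [← inv_smul_smul₀ (four_ne_zero' ℚ) (X 0 * X 1), ← hdiff]
    exact Subalgebra.smul_mem _
      (sub_mem (Algebra.subset_adjoin (by simp)) (Algebra.subset_adjoin (by simp))) _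

theorem map_sumDiffEquiv_adjoin_sq :
    (Algebra.adjoin ℚ (range fun i => (X i ^ 2 : MvPolynomial (Fin 2) ℚ))).map
        sumDiffEquiv.toAlgHom =
      Algebra.adjoin ℚ ({(X 0 + X 1) ^ 2, X 0 * X 1} : Set (MvPolynomial (Fin 2) ℚ)) := by
  rw [AlgHom.map_adjoin, ← adjoin_sumDiff_sq, ← range_comp]
  congr 1
  ext
  simp [Fin.exists_fin_two, sumDiffEquiv, eq_comm]

/-- A polynomial `p ∈ ℚ[X, Y]` is fixed by both `ℚ`-algebra automorphisms
`s : X ↦ Y, Y ↦ X` and `r : X ↦ −Y, Y ↦ −X` if and only if it belongs to the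
`ℚ`-subalgebra generated by `(X + Y)²` and `XY`. -/
theorem invariants_swap_and_antidiagonal (p : MvPolynomial (Fin 2) ℚ) :
    (aeval ![X 1, X 0] p = p ∧ aeval ![-X 1, -X 0] p = p) ↔
      p ∈ Algebra.adjoin ℚ
        ({(X 0 + X 1) ^ 2, X 0 * X 1} : Set (MvPolynomial (Fin 2) ℚ)) := by
  obtain ⟨f, rfl⟩ := sumDiffEquiv.surjective p
  rw [aeval_swap_sumDiffEquiv, aeval_negSwap_sumDiffEquiv, sumDiffEquiv.injective.eq_iff,
    sumDiffEquiv.injective.eq_iff, ← map_sumDiffEquiv_adjoin_sq, Subalgebra.mem_map]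
  simp only [AlgEquiv.coe_toAlgHom, sumDiffEquiv.injective.eq_iff, exists_eq_left,
    mem_adjoin_sq_iff, Fin.forall_fin_two, and_comm]
end
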